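/- Let ℛ ⊆ ℝ² be a bounded set, t ∈ (0,1), and let (A_ν, B_ν) be sequences of Borel subsets of ℝ² with |A_ν| → 1, |B_ν| → 1, and |tA_ν + (1-t)B_ν| → 1. Suppose 𝒞_ν ⊆ ℛ are compact convex sets with |A_ν △ 𝒞_ν| → 0 and |B_ν △ 𝒞_ν| → 0. Then sup_{z ∈ A_ν} dist(z, 𝒞_ν) → 0 and sup_{z ∈ B_ν} dist(z, 𝒞_ν) → 0 as ν → ∞. -/

import Mathlib

open MeasureTheory Set Filter Metric
open scoped Pointwise ENNReal Topology RealInnerProductSpace symmDiff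

/-!
Let `z ∈ A` be at distance `ρ ≥ ε` from `C`, with nearest point `v ∈ C`. The hyperplane through `v`
orthogonal to `z - v` supports `C`, so `t z + (1 - t) w ∉ C` as soon as `(1 - t) ‖w - v‖ < t ρ`.
The points `w ∈ C` that close to `v` contain the homothetic copy of `C` of ratio `θ ≈ t ε / d`
centred at `v` (`d` bounds the diameters), hence have measure at least `θⁿ |C|`. Thus
`t A + (1 - t) B` contains `A ∩ B ∩ C` and, disjoint from `C`, a translate of
`(1 - t) (B ∩ θ-copy)`, so `|t A + (1 - t) B| ≥ (1 + ((1 - t) θ)ⁿ) |C| - |A ∆ C| - 2 |B ∆ C|`.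
This is incompatible with `|C| → 1`, `|t A + (1 - t) B| → 1` and the symmetric differences
tending to `0`. Swapping `A, B` and `t, 1 - t` gives the statement for `B`.
-/

theorem ENNReal.eventually_ne_top_of_tendsto_toReal {ι : Type*} {l : Filter ι} {f : ι → ℝ≥0∞}
    {x : ℝ} (hx : x ≠ 0) (h : Tendsto (fun i ↦ (f i).toReal) l (𝓝 x)) : ∀ᶠ i in l, f i ≠ ∞ :=
  (h.eventually_ne hx).mono fun _ hi hfi ↦ hi (by simp [hfi])

theorem ENNReal.tendsto_of_tendsto_toReal {ι : Type*} {l : Filter ι} {f : ι → ℝ≥0∞} {x : ℝ}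
    (hf : ∀ᶠ i in l, f i ≠ ∞) (h : Tendsto (fun i ↦ (f i).toReal) l (𝓝 x)) :
    Tendsto f l (𝓝 (ENNReal.ofReal x)) :=
  (ENNReal.tendsto_ofReal h).congr' (hf.mono fun _ hi ↦ ENNReal.ofReal_toReal hi)

theorem MeasureTheory.tendsto_measure_of_tendsto_measure_symmDiff {α ι : Type*}
    [MeasurableSpace α] {μ : Measure α} {l : Filter ι} {s t : ι → Set α} {a : ℝ≥0∞}
    (ha : a ≠ ∞) (hs : Tendsto (fun i ↦ μ (s i)) l (𝓝 a))
    (hst : Tendsto (fun i ↦ μ (s i ∆ t i)) l (𝓝 0)) : Tendsto (fun i ↦ μ (t i)) l (𝓝 a) := by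
  refine tendsto_of_tendsto_of_tendsto_of_le_of_le (g := fun i ↦ μ (s i) - μ (s i ∆ t i))
    (h := fun i ↦ μ (s i) + μ (s i ∆ t i)) ?_ ?_ (fun i ↦ ?_) (fun i ↦ ?_)
  · simpa using ENNReal.Tendsto.sub hs hst (Or.inl ha)
  · simpa using hs.add hst
  · exact tsub_le_iff_right.2 (tsub_le_iff_left.1 le_measure_symmDiff)
  · show μ (t i) ≤ μ (s i) + μ (s i ∆ t i)
    rw [symmDiff_comm]
    exact tsub_le_iff_left.1 le_measure_symmDiff

theorem MeasureTheory.tendsto_measure_symmDiff_of_tendsto_toReal {α ι : Type*}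
    [MeasurableSpace α] {μ : Measure α} {l : Filter ι} {s t : ι → Set α}
    (hs : ∀ᶠ i in l, μ (s i) ≠ ∞) (ht : ∀ i, μ (t i) ≠ ∞)
    (h : Tendsto (fun i ↦ (μ (s i ∆ t i)).toReal) l (𝓝 0)) :
    Tendsto (fun i ↦ μ (s i ∆ t i)) l (𝓝 0) := by
  simpa using ENNReal.tendsto_of_tendsto_toReal
    (hs.mono fun i hi ↦ measure_symmDiff_ne_top hi (ht i)) h

section Geometry

variable {E : Type*} [NormedAddCommGroup E]

theorem Convex.image_homothety_subset_inter_closedBall [NormedSpace ℝ E] {C : Set E}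
    (hC : Convex ℝ C) {v : E} (hv : v ∈ C) {d θ : ℝ} (hd : C ⊆ closedBall v d) (hθ0 : 0 ≤ θ)
    (hθ1 : θ ≤ 1) : AffineMap.homothety v θ '' C ⊆ C ∩ closedBall v (θ * d) := by
  rintro _ ⟨w, hw, rfl⟩
  refine ⟨?_, ?_⟩
  · rw [AffineMap.homothety_eq_lineMap]
    exact hC.lineMap_mem hv hw ⟨hθ0, hθ1⟩
  · rw [mem_closedBall, dist_homothety_center, Real.norm_of_nonneg hθ0, dist_comm]
    exact mul_le_mul_of_nonneg_left (hd hw) hθ0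

theorem IsCompact.exists_infDist_eq_dist_and_inner_le [InnerProductSpace ℝ E] {C : Set E}
    (hCc : IsCompact C) (hCv : Convex ℝ C) (hne : C.Nonempty) (z : E) :
    ∃ v ∈ C, infDist z C = dist z v ∧ ∀ c ∈ C, ⟪z - v, c - v⟫ ≤ 0 := by
  obtain ⟨v, hvC, hv⟩ := hCc.exists_infDist_eq_dist hne z
  refine ⟨v, hvC, hv, (norm_eq_iInf_iff_real_inner_le_zero hCv hvC).1 ?_⟩
  simp_rw [← dist_eq_norm]
  rw [← hv, infDist_eq_iInf]

theorem smul_add_smul_notMem_of_inner_le [InnerProductSpace ℝ E] {C : Set E} {z v w : E}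
    {t : ℝ} (ht : t ≤ 1) (hv : ∀ c ∈ C, ⟪z - v, c - v⟫ ≤ 0)
    (hw : (1 - t) * ‖w - v‖ < t * ‖z - v‖) : t • z + (1 - t) • w ∉ C := by
  intro hC
  have hsplit : ⟪z - v, t • z + (1 - t) • w - v⟫
      = t * ‖z - v‖ ^ 2 + (1 - t) * ⟪z - v, w - v⟫ := by
    rw [show t • z + (1 - t) • w - v = t • (z - v) + (1 - t) • (w - v) by module,
      inner_add_right, real_inner_smul_right, real_inner_smul_right, real_inner_self_eq_norm_sq]
  have hcs : -(‖z - v‖ * ‖w - v‖) ≤ ⟪z - v, w - v⟫ :=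
    neg_le_of_abs_le (abs_real_inner_le_norm _ _)
  have hρ : 0 < ‖z - v‖ := by
    by_contra! h
    nlinarith [norm_nonneg (z - v), norm_nonneg (w - v)]
  nlinarith [hv _ hC, mul_lt_mul_of_pos_left hw hρ, mul_le_mul_of_nonneg_left hcs (sub_nonneg.2 ht)]

end Geometry

section Measure

variable {E : Type*} [NormedAddCommGroup E] [MeasurableSpace E] [BorelSpace E]

theorem Convex.ofReal_pow_mul_measure_le_measure_inter_closedBall [NormedSpace ℝ E]
    [FiniteDimensional ℝ E] (μ : Measure E) [μ.IsAddHaarMeasure] {C : Set E} (hC : Convex ℝ C)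
    {v : E} (hv : v ∈ C) {d θ : ℝ} (hd : C ⊆ closedBall v d) (hθ0 : 0 ≤ θ) (hθ1 : θ ≤ 1) :
    ENNReal.ofReal (θ ^ Module.finrank ℝ E) * μ C ≤ μ (C ∩ closedBall v (θ * d)) := by
  calc ENNReal.ofReal (θ ^ Module.finrank ℝ E) * μ C = μ (AffineMap.homothety v θ '' C) := by
        rw [Measure.addHaar_image_homothety, abs_of_nonneg (pow_nonneg hθ0 _)]
    _ ≤ μ (C ∩ closedBall v (θ * d)) :=
        measure_mono (hC.image_homothety_subset_inter_closedBall hv hd hθ0 hθ1)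

theorem measure_inter_add_ofReal_mul_le_measure_smul_add_smul [NormedSpace ℝ E]
    [FiniteDimensional ℝ E] (μ : Measure E) [μ.IsAddHaarMeasure] {A B C K : Set E}
    (hC : MeasurableSet C) {z : E} (hz : z ∈ A) (t : ℝ) (hK : ∀ w ∈ K, t • z + (1 - t) • w ∉ C) :
    μ (A ∩ B ∩ C) + ENNReal.ofReal (|1 - t| ^ Module.finrank ℝ E) * μ (B ∩ K)
      ≤ μ (t • A + (1 - t) • B) := by
  set S := t • A + (1 - t) • B
  have hinside : A ∩ B ∩ C ⊆ S ∩ C := by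
    rintro w ⟨⟨hwA, hwB⟩, hwC⟩
    refine ⟨?_, hwC⟩
    rw [← Convex.combo_self (add_sub_cancel t 1) w]
    exact add_mem_add (smul_mem_smul_set hwA) (smul_mem_smul_set hwB)
  have houtside : t • z +ᵥ (1 - t) • (B ∩ K) ⊆ S \ C := by
    rintro _ ⟨_, ⟨w, hw, rfl⟩, rfl⟩
    exact ⟨add_mem_add (smul_mem_smul_set hz) (smul_mem_smul_set hw.1), hK w hw.2⟩
  calc μ (A ∩ B ∩ C) + ENNReal.ofReal (|1 - t| ^ Module.finrank ℝ E) * μ (B ∩ K)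
      = μ (A ∩ B ∩ C) + μ (t • z +ᵥ (1 - t) • (B ∩ K)) := by
        rw [measure_vadd, Measure.addHaar_smul, abs_pow]
    _ ≤ μ (S ∩ C) + μ (S \ C) := add_le_add (measure_mono hinside) (measure_mono houtside)
    _ = μ S := measure_inter_add_sdiff S hC

theorem measure_add_mul_measure_le_of_le_infDist [InnerProductSpace ℝ E] [FiniteDimensional ℝ E]
    (μ : Measure E) [μ.IsAddHaarMeasure] {A B C : Set E} (hCc : IsCompact C) (hCv : Convex ℝ C)
    {t θ d ε : ℝ} (ht0 : 0 ≤ t) (ht1 : t ≤ 1) (hθ0 : 0 ≤ θ) (hθ1 : θ ≤ 1) (hd : diam C ≤ d)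
    (hθd : (1 - t) * (θ * d) < t * ε) {z : E} (hz : z ∈ A) (hzC : ε ≤ infDist z C) :
    μ C + ENNReal.ofReal (((1 - t) * θ) ^ Module.finrank ℝ E) * μ C
      ≤ μ (t • A + (1 - t) • B) + μ (A ∆ C) + 2 * μ (B ∆ C) := by
  have hne : C.Nonempty := by
    refine nonempty_iff_ne_empty.2 fun hC ↦ ?_
    rw [hC, infDist_empty] at hzC
    nlinarith [mul_nonneg (sub_nonneg.2 ht1) (mul_nonneg hθ0 (diam_nonneg.trans hd))]
  obtain ⟨v, hvC, hv, hsupp⟩ := hCc.exists_infDist_eq_dist_and_inner_le hCv hne z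
  have hCv_ball : C ⊆ closedBall v d := fun w hw ↦
    (dist_le_diam_of_mem hCc.isBounded hw hvC).trans hd
  set K := C ∩ closedBall v (θ * d)
  have hK : ∀ w ∈ K, t • z + (1 - t) • w ∉ C := fun w hw ↦ by
    refine smul_add_smul_notMem_of_inner_le ht1 hsupp ?_
    rw [← dist_eq_norm, ← dist_eq_norm, ← hv]
    calc (1 - t) * dist w v ≤ (1 - t) * (θ * d) :=
          mul_le_mul_of_nonneg_left (mem_closedBall.1 hw.2) (sub_nonneg.2 ht1)
      _ < t * ε := hθd
      _ ≤ t * infDist z C := mul_le_mul_of_nonneg_left hzC ht0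
  have hcover : μ C ≤ μ (A ∩ B ∩ C) + μ (A ∆ C) + μ (B ∆ C) := by
    refine (measure_mono fun x hx ↦ ?_).trans
      ((measure_union_le _ _).trans (add_le_add_left (measure_union_le _ _) _))
    by_cases hxA : x ∈ A <;> by_cases hxB : x ∈ B <;> simp [mem_symmDiff, *]
  have hslab : ENNReal.ofReal (θ ^ Module.finrank ℝ E) * μ C ≤ μ (B ∩ K) + μ (B ∆ C) :=
    calc ENNReal.ofReal (θ ^ Module.finrank ℝ E) * μ C ≤ μ K :=
          hCv.ofReal_pow_mul_measure_le_measure_inter_closedBall μ hvC hCv_ball hθ0 hθ1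
      _ ≤ μ (B ∩ K) + μ (K \ B) := by
          rw [inter_comm]
          exact measure_le_inter_add_sdiff μ K B
      _ ≤ μ (B ∩ K) + μ (B ∆ C) := by
          gcongr
          exact fun x hx ↦ mem_symmDiff.2 (Or.inr ⟨hx.1.1, hx.2⟩)
  have hshift := measure_inter_add_ofReal_mul_le_measure_smul_add_smul μ hCc.measurableSet hz t
    (B := B) hK
  rw [abs_of_nonneg (sub_nonneg.2 ht1)] at hshift
  set c := ENNReal.ofReal ((1 - t) ^ Module.finrank ℝ E)
  have hc : c ≤ 1 := ENNReal.ofReal_le_one.2 (pow_le_one₀ (sub_nonneg.2 ht1) (by linarith))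
  calc μ C + ENNReal.ofReal (((1 - t) * θ) ^ Module.finrank ℝ E) * μ C
      = μ C + c * (ENNReal.ofReal (θ ^ Module.finrank ℝ E) * μ C) := by
        rw [mul_pow, ENNReal.ofReal_mul (pow_nonneg (sub_nonneg.2 ht1) _), mul_assoc]
    _ ≤ μ (A ∩ B ∩ C) + μ (A ∆ C) + μ (B ∆ C) + c * (μ (B ∩ K) + μ (B ∆ C)) := by gcongr
    _ = (μ (A ∩ B ∩ C) + c * μ (B ∩ K)) + μ (A ∆ C) + μ (B ∆ C) + c * μ (B ∆ C) := by ring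
    _ ≤ μ (t • A + (1 - t) • B) + μ (A ∆ C) + μ (B ∆ C) + 1 * μ (B ∆ C) := by gcongr
    _ = μ (t • A + (1 - t) • B) + μ (A ∆ C) + 2 * μ (B ∆ C) := by ring

end Measure

theorem eventually_infDist_lt_of_tendsto_measure {E ι : Type*} [NormedAddCommGroup E]
    [InnerProductSpace ℝ E] [FiniteDimensional ℝ E] [MeasurableSpace E] [BorelSpace E]
    (μ : Measure E) [μ.IsAddHaarMeasure] {l : Filter ι} {t d : ℝ} (ht : t ∈ Ioo (0 : ℝ) 1)
    {A B C : ι → Set E} (hCc : ∀ i, IsCompact (C i)) (hCv : ∀ i, Convex ℝ (C i))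
    (hd : ∀ i, diam (C i) ≤ d) {a : ℝ≥0∞} (ha0 : a ≠ 0) (ha : a ≠ ∞)
    (hCa : Tendsto (fun i ↦ μ (C i)) l (𝓝 a))
    (hSa : Tendsto (fun i ↦ μ (t • A i + (1 - t) • B i)) l (𝓝 a))
    (hAC : Tendsto (fun i ↦ μ (A i ∆ C i)) l (𝓝 0))
    (hBC : Tendsto (fun i ↦ μ (B i ∆ C i)) l (𝓝 0)) :
    ∀ ε > 0, ∀ᶠ i in l, ∀ z ∈ A i, infDist z (C i) < ε := by
  intro ε hε
  obtain ⟨ht0, ht1⟩ := ht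
  obtain ⟨θ₀, hθ₀, hθ₀d⟩ := exists_pos_mul_lt (mul_pos ht0 hε) ((1 - t) * max d 0)
  set θ := min θ₀ 1
  have hθ : 0 < θ := lt_min hθ₀ one_pos
  have hθd : (1 - t) * (θ * max d 0) < t * ε := by
    have : 0 ≤ (1 - t) * max d 0 := mul_nonneg (by linarith) (le_max_right _ _)
    calc (1 - t) * (θ * max d 0) = (1 - t) * max d 0 * θ := by ring
      _ ≤ (1 - t) * max d 0 * θ₀ := mul_le_mul_of_nonneg_left (min_le_left _ _) this
      _ < t * ε := hθ₀d
  set c := ENNReal.ofReal (((1 - t) * θ) ^ Module.finrank ℝ E)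
  have hc : c ≠ 0 := by
    simp only [c, ne_eq, ENNReal.ofReal_eq_zero, not_le]
    exact pow_pos (mul_pos (by linarith) hθ) _
  have hlower : Tendsto (fun i ↦ μ (C i) + c * μ (C i)) l (𝓝 (a + c * a)) :=
    hCa.add (ENNReal.Tendsto.const_mul hCa (Or.inr ENNReal.ofReal_ne_top))
  have hupper : Tendsto (fun i ↦ μ (t • A i + (1 - t) • B i) + μ (A i ∆ C i) + 2 * μ (B i ∆ C i))
      l (𝓝 a) := by
    simpa using (hSa.add hAC).add (ENNReal.Tendsto.const_mul hBC (Or.inr ENNReal.ofNat_ne_top))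
  filter_upwards [hupper.eventually_lt hlower (ENNReal.lt_add_right ha (mul_ne_zero hc ha0))]
    with i hi z hz
  by_contra! hzC
  exact hi.not_ge <| measure_add_mul_measure_le_of_le_infDist μ (hCc i) (hCv i) ht0.le ht1.le
    hθ.le (min_le_right _ _) ((hd i).trans (le_max_left _ _)) hθd hz hzC

theorem stmt18_general (t : ℝ) (ht : t ∈ Set.Ioo (0:ℝ) 1)
    (R : Set (EuclideanSpace ℝ (Fin 2))) (hR : Bornology.IsBounded R)
    (Aν Bν Cν : ℕ → Set (EuclideanSpace ℝ (Fin 2)))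
    (hCν : ∀ ν, IsCompact (Cν ν) ∧ Convex ℝ (Cν ν) ∧ Cν ν ⊆ R)
    (hA1 : Tendsto (fun ν => (volume (Aν ν)).toReal) atTop (𝓝 1))
    (hB1 : Tendsto (fun ν => (volume (Bν ν)).toReal) atTop (𝓝 1))
    (hS1 : Tendsto (fun ν => (volume (t • Aν ν + (1 - t) • Bν ν)).toReal) atTop (𝓝 1))
    (hAC : Tendsto (fun ν => (volume (symmDiff (Aν ν) (Cν ν))).toReal) atTop (𝓝 0))
    (hBC : Tendsto (fun ν => (volume (symmDiff (Bν ν) (Cν ν))).toReal) atTop (𝓝 0)) :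
    (∀ ε > (0:ℝ), ∃ N, ∀ ν ≥ N, ∀ z ∈ Aν ν, infDist z (Cν ν) < ε) ∧
    (∀ ε > (0:ℝ), ∃ N, ∀ ν ≥ N, ∀ z ∈ Bν ν, infDist z (Cν ν) < ε) := by
  have hfin {s : ℕ → Set (EuclideanSpace ℝ (Fin 2))}
      (hs : Tendsto (fun ν ↦ (volume (s ν)).toReal) atTop (𝓝 1)) :
      ∀ᶠ ν in atTop, volume (s ν) ≠ ∞ :=
    ENNReal.eventually_ne_top_of_tendsto_toReal one_ne_zero hs
  have hone {s : ℕ → Set (EuclideanSpace ℝ (Fin 2))}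
      (hs : Tendsto (fun ν ↦ (volume (s ν)).toReal) atTop (𝓝 1)) :
      Tendsto (fun ν ↦ volume (s ν)) atTop (𝓝 1) := by
    simpa using ENNReal.tendsto_of_tendsto_toReal (hfin hs) hs
  have hzero {s : ℕ → Set (EuclideanSpace ℝ (Fin 2))}
      (hs : Tendsto (fun ν ↦ (volume (s ν)).toReal) atTop (𝓝 1)) :
      Tendsto (fun ν ↦ (volume (s ν ∆ Cν ν)).toReal) atTop (𝓝 0) →
        Tendsto (fun ν ↦ volume (s ν ∆ Cν ν)) atTop (𝓝 0) :=
    tendsto_measure_symmDiff_of_tendsto_toReal (hfin hs) fun ν ↦ (hCν ν).1.measure_lt_top.ne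
  have hC := tendsto_measure_of_tendsto_measure_symmDiff ENNReal.one_ne_top (hone hA1)
    (hzero hA1 hAC)
  have hd ν : diam (Cν ν) ≤ diam R := diam_mono (hCν ν).2.2 hR
  have hS' : Tendsto (fun ν ↦ volume ((1 - t) • Bν ν + (1 - (1 - t)) • Aν ν)) atTop (𝓝 1) := by
    simpa only [sub_sub_cancel, add_comm] using hone hS1
  have ht' : 1 - t ∈ Ioo (0 : ℝ) 1 := ⟨sub_pos.2 ht.2, sub_lt_self 1 ht.1⟩
  refine ⟨fun ε hε ↦ eventually_atTop.1 ?_, fun ε hε ↦ eventually_atTop.1 ?_⟩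
  · exact eventually_infDist_lt_of_tendsto_measure volume ht (fun ν ↦ (hCν ν).1)
      (fun ν ↦ (hCν ν).2.1) hd one_ne_zero ENNReal.one_ne_top hC (hone hS1) (hzero hA1 hAC)
      (hzero hB1 hBC) ε hε
  · exact eventually_infDist_lt_of_tendsto_measure volume ht' (fun ν ↦ (hCν ν).1)
      (fun ν ↦ (hCν ν).2.1) hd one_ne_zero ENNReal.one_ne_top hC hS' (hzero hB1 hBC)
      (hzero hA1 hAC) ε hε

theorem stmt18 (t : ℝ) (ht : t ∈ Set.Ioo (0:ℝ) 1)
    (R : Set (EuclideanSpace ℝ (Fin 2))) (hR : Bornology.IsBounded R)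
    (Aν Bν Cν : ℕ → Set (EuclideanSpace ℝ (Fin 2)))
    (hAνm : ∀ ν, MeasurableSet (Aν ν)) (hBνm : ∀ ν, MeasurableSet (Bν ν))
    (hCν : ∀ ν, IsCompact (Cν ν) ∧ Convex ℝ (Cν ν) ∧ Cν ν ⊆ R)
    (hA1 : Tendsto (fun ν => (volume (Aν ν)).toReal) atTop (𝓝 1))
    (hB1 : Tendsto (fun ν => (volume (Bν ν)).toReal) atTop (𝓝 1))
    (hS1 : Tendsto (fun ν => (volume (t • Aν ν + (1 - t) • Bν ν)).toReal) atTop (𝓝 1))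
    (hAC : Tendsto (fun ν => (volume (symmDiff (Aν ν) (Cν ν))).toReal) atTop (𝓝 0))
    (hBC : Tendsto (fun ν => (volume (symmDiff (Bν ν) (Cν ν))).toReal) atTop (𝓝 0)) :
    (∀ ε > (0:ℝ), ∃ N, ∀ ν ≥ N, ∀ z ∈ Aν ν, infDist z (Cν ν) < ε) ∧
    (∀ ε > (0:ℝ), ∃ N, ∀ ν ≥ N, ∀ z ∈ Bν ν, infDist z (Cν ν) < ε) :=
  stmt18_general t ht R hR Aν Bν Cν hCν hA1 hB1 hS1 hAC hBC
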